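/- arXiv:1907.01309 — 3 statements merged into one kernel-verified Lean document; each statement's English description precedes it below -/
import Mathlib

section
/- Let X : [0,T] → R^p be continuous, and suppose for each j ∈ {1,...,p} there is a nondegenerate subinterval [t_{j1}, t_{j2}] ⊆ [0,T] with t_{j1} < t_{j2} on which |X^j(t)| - Σ_{i ≠ j} |X^i(t)| > ε for a fixed ε ∈ (0,1). Then the matrix S̄_T = ∫_0^T X(t)X(t)^T dt is positive definite. -/
/-!
Writing `g t = X t ⬝ᵥ v`, the quadratic form of `S̄_T` at `v` is `∫₀ᵀ g t ^ 2 dt`. Choose `i` with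
`|v i|` maximal. On the `i`-th dominance interval the `i`-th term of `g t` outweighs all the others:
`|g t| ≥ (|X t i| - ∑_{j ≠ i} |X t j|) |v i| > ε |v i| > 0`, so the integral of `g ^ 2` over that
interval alone is positive.
-/

open Matrix MeasureTheory Finset

theorem dotProduct_mulVec_eq_intervalIntegral_sq {ι : Type*} [Fintype ι] {X : ℝ → ι → ℝ}
    {a b : ℝ} {S : Matrix ι ι ℝ}
    (hX : ∀ i j, IntervalIntegrable (fun t => X t i * X t j) volume a b)
    (hS : ∀ i j, S i j = ∫ t in a..b, X t i * X t j) (v : ι → ℝ) :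
    v ⬝ᵥ (S *ᵥ v) = ∫ t in a..b, (X t ⬝ᵥ v) ^ 2 := by
  have hterm : ∀ i j, IntervalIntegrable (fun t => v i * (X t i * X t j) * v j) volume a b :=
    fun i j => ((hX i j).const_mul (v i)).mul_const (v j)
  calc v ⬝ᵥ (S *ᵥ v) = ∑ i, ∑ j, v i * S i j * v j := by
        simp only [dotProduct, mulVec, mul_sum, mul_assoc]
    _ = ∑ i, ∑ j, ∫ t in a..b, v i * (X t i * X t j) * v j := by
        simp only [hS, intervalIntegral.integral_const_mul, intervalIntegral.integral_mul_const]
    _ = ∫ t in a..b, ∑ i, ∑ j, v i * (X t i * X t j) * v j := by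
        have hrow : ∀ i, IntervalIntegrable (fun t => ∑ j, v i * (X t i * X t j) * v j)
            volume a b := fun i => by
          simpa only [Finset.sum_fn] using IntervalIntegrable.sum univ fun j _ => hterm i j
        rw [intervalIntegral.integral_finsetSum fun i _ => hrow i]
        exact sum_congr rfl fun i _ =>
          (intervalIntegral.integral_finsetSum fun j _ => hterm i j).symm
    _ = ∫ t in a..b, (X t ⬝ᵥ v) ^ 2 := by
        congr 1 with t
        simp only [dotProduct, sq, sum_mul_sum]
        exact sum_congr rfl fun i _ => sum_congr rfl fun j _ => by ring

theorem sub_sum_erase_mul_le_abs_dotProduct {ι : Type*} [Fintype ι] [DecidableEq ι]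
    (x v : ι → ℝ) {i : ι} (hi : ∀ j, |v j| ≤ |v i|) :
    (|x i| - ∑ j ∈ univ.erase i, |x j|) * |v i| ≤ |x ⬝ᵥ v| := by
  have hrest : |∑ j ∈ univ.erase i, x j * v j| ≤ (∑ j ∈ univ.erase i, |x j|) * |v i| :=
    calc |∑ j ∈ univ.erase i, x j * v j| ≤ ∑ j ∈ univ.erase i, |x j| * |v j| := by
          simpa only [abs_mul] using abs_sum_le_sum_abs (fun j => x j * v j) (univ.erase i)
      _ ≤ ∑ j ∈ univ.erase i, |x j| * |v i| :=
          sum_le_sum fun j _ => mul_le_mul_of_nonneg_left (hi j) (abs_nonneg _)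
      _ = (∑ j ∈ univ.erase i, |x j|) * |v i| := (sum_mul _ _ _).symm
  have hsplit : x ⬝ᵥ v = x i * v i + ∑ j ∈ univ.erase i, x j * v j :=
    (add_sum_erase univ (fun j => x j * v j) (mem_univ i)).symm
  have htri := abs_sub_abs_le_abs_sub (x i * v i) (-∑ j ∈ univ.erase i, x j * v j)
  rw [abs_neg, sub_neg_eq_add, ← hsplit, abs_mul] at htri
  linarith

theorem mul_le_intervalIntegral_of_le_on_Icc {f : ℝ → ℝ} {a b c d m : ℝ}
    (hf : ContinuousOn f (Set.Icc a b)) (hf0 : ∀ t, 0 ≤ f t)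
    (hac : a ≤ c) (hcd : c ≤ d) (hdb : d ≤ b) (hm : ∀ t ∈ Set.Icc c d, m ≤ f t) :
    (d - c) * m ≤ ∫ t in a..b, f t := by
  have hint : ∀ x y, a ≤ x → x ≤ y → y ≤ b → IntervalIntegrable f volume x y :=
    fun x y hax hxy hyb =>
      (hf.mono (Set.Icc_subset_Icc hax hyb)).intervalIntegrable_of_Icc hxy
  have hmid : (d - c) * m ≤ ∫ t in c..d, f t := by
    simpa only [intervalIntegral.integral_const, smul_eq_mul] using
      intervalIntegral.integral_mono_on hcd intervalIntegrable_const
        (hint c d hac hcd hdb) hm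
  rw [← intervalIntegral.integral_add_adjacent_intervals (hint a c le_rfl hac (hcd.trans hdb))
      (hint c b hac (hcd.trans hdb) le_rfl),
    ← intervalIntegral.integral_add_adjacent_intervals (hint c d hac hcd hdb)
      (hint d b (hac.trans hcd) hdb le_rfl)]
  have hleft : 0 ≤ ∫ t in a..c, f t := intervalIntegral.integral_nonneg hac fun t _ => hf0 t
  have hright : 0 ≤ ∫ t in d..b, f t := intervalIntegral.integral_nonneg hdb fun t _ => hf0 t
  linarith

theorem stmt6_general {p : ℕ} (T ε : ℝ) (hε0 : 0 < ε)
    (X : ℝ → Fin p → ℝ) (hX : ContinuousOn X (Set.Icc 0 T))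
    (t1 t2 : Fin p → ℝ)
    (hsub : ∀ j, 0 ≤ t1 j ∧ t1 j < t2 j ∧ t2 j ≤ T)
    (hdom : ∀ j, ∀ t ∈ Set.Icc (t1 j) (t2 j),
      ε < |X t j| - ∑ i ∈ univ.erase j, |X t i|)
    (Sbar : Matrix (Fin p) (Fin p) ℝ)
    (hSbar : ∀ i j, Sbar i j = ∫ t in (0 : ℝ)..T, X t i * X t j) :
    ∀ v : Fin p → ℝ, v ≠ 0 → 0 < v ⬝ᵥ (Sbar *ᵥ v) := by
  intro v hv
  obtain ⟨j, hj⟩ := Function.ne_iff.mp hv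
  obtain ⟨i, -, hi⟩ := exists_max_image univ (fun j => |v j|) ⟨j, mem_univ j⟩
  have hvi : 0 < |v i| := (abs_pos.mpr hj).trans_le (hi j (mem_univ j))
  obtain ⟨h0, h12, h2T⟩ := hsub i
  have hXi : ∀ i, ContinuousOn (fun t => X t i) (Set.Icc 0 T) :=
    fun i => (continuous_apply i).comp_continuousOn hX
  have hquad := dotProduct_mulVec_eq_intervalIntegral_sq (fun i j =>
    ((hXi i).mul (hXi j)).intervalIntegrable_of_Icc (h0.trans (h12.le.trans h2T))) hSbar v
  have hbound : ∀ t ∈ Set.Icc (t1 i) (t2 i), (ε * |v i|) ^ 2 ≤ (X t ⬝ᵥ v) ^ 2 := fun t ht => by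
    rw [← sq_abs (X t ⬝ᵥ v)]
    gcongr
    exact (mul_le_mul_of_nonneg_right (hdom i t ht).le hvi.le).trans
      (sub_sum_erase_mul_le_abs_dotProduct (X t) v fun j => hi j (mem_univ j))
  have hg : ContinuousOn (fun t => (X t ⬝ᵥ v) ^ 2) (Set.Icc 0 T) :=
    (continuousOn_finsetSum _ fun j _ => (hXi j).mul continuousOn_const).pow 2
  have hlower := mul_le_intervalIntegral_of_le_on_Icc hg (fun t => sq_nonneg (X t ⬝ᵥ v))
    h0 h12.le h2T hbound
  have hlen : 0 < t2 i - t1 i := sub_pos.mpr h12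
  rw [hquad]
  exact lt_of_lt_of_le (by positivity) hlower

/-- Lemma 2 (paper): if the continuous function `X : [0,T] → ℝᵖ` is, for each index `j`,
`ε`-diagonally dominant in its `j`-th component on some nondegenerate subinterval
`[t_{j1}, t_{j2}] ⊆ [0,T]`, then `S̄_T = ∫_0^T X(t) X(t)ᵀ dt` is positive definite. -/
theorem stmt6 {p : ℕ} (T ε : ℝ) (hT : 0 < T) (hε0 : 0 < ε) (hε1 : ε < 1)
    (X : ℝ → Fin p → ℝ) (hX : ContinuousOn X (Set.Icc 0 T))
    (t1 t2 : Fin p → ℝ)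
    (hsub : ∀ j, 0 ≤ t1 j ∧ t1 j < t2 j ∧ t2 j ≤ T)
    (hdom : ∀ j, ∀ t ∈ Set.Icc (t1 j) (t2 j),
      ε < |X t j| - ∑ i ∈ univ.erase j, |X t i|)
    (Sbar : Matrix (Fin p) (Fin p) ℝ)
    (hSbar : ∀ i j, Sbar i j = ∫ t in (0 : ℝ)..T, X t i * X t j) :
    ∀ v : Fin p → ℝ, v ≠ 0 → 0 < v ⬝ᵥ (Sbar *ᵥ v) :=
  stmt6_general T ε hε0 X hX t1 t2 hsub hdom Sbar hSbar
end

section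
/- Suppose for each i ∈ {1,...,N}, the symmetric matrix M_i = ∫_0^T K_i^{(i)}(t) (K_i^{(i)}(t))^T dt is positive definite, where K_i^{(i)} is the block of coordinates of K_i corresponding to the i-th block of a partition of {1,...,p}. If additionally the trajectories are such that each full vector K_i(t) = K(x_i(t)) has its i-th block equal to K_i^{(i)}(t), and the blocks partition all p coordinates, then the matrix Σ_{i=1}^N ∫_0^T K_i(t) K_i(t)^T dt is positive definite, provided the union of the trajectories passes through p points at which the vectors K(·) are linearly independent. -/
open Matrix MeasureTheory Function

/-- If `f` is continuous on `[0,T]` and nonzero at some point of `[0,T]`, then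
`∫_0^T f² > 0`. -/
lemma sq_integral_pos {f : ℝ → ℝ} {T t : ℝ} (hT : 0 < T)
    (hf : ContinuousOn f (Set.Icc 0 T)) (ht : t ∈ Set.Icc 0 T) (hft : f t ≠ 0) :
    0 < ∫ s in (0:ℝ)..T, (f s) ^ 2 := by
  have hint : IntervalIntegrable (fun s => (f s) ^ 2) volume 0 T := by
    apply ContinuousOn.intervalIntegrable
    rw [Set.uIcc_of_le hT.le]
    exact (hf.pow 2)
  rw [intervalIntegral.integral_pos_iff_support_of_nonneg_ae
    (Filter.Eventually.of_forall fun s => sq_nonneg (f s)) hint]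
  refine ⟨hT, ?_⟩
  -- find a neighborhood of t in [0,T] where f ≠ 0
  have hcw : ContinuousWithinAt f (Set.Icc 0 T) t := hf t ht
  have hmem : f ⁻¹' {0}ᶜ ∈ nhdsWithin t (Set.Icc 0 T) :=
    hcw (isOpen_compl_singleton.mem_nhds hft)
  rw [mem_nhdsWithin] at hmem
  obtain ⟨U, hU, htU, hUsub⟩ := hmem
  obtain ⟨δ, hδ, hball⟩ := Metric.isOpen_iff.1 hU t htU
  set l := max 0 (t - δ) with hl
  set u := min T (t + δ) with hu
  have hlu : l < u := by
    rw [hl, hu]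
    apply max_lt <;> apply lt_min
    · exact hT
    · linarith [ht.1]
    · linarith [ht.2]
    · linarith [hδ]
  have hsub : Set.Ioo l u ⊆ support (fun s => (f s) ^ 2) ∩ Set.Ioc 0 T := by
    intro s hs
    have hs1 : s ∈ Set.Icc 0 T := ⟨le_trans (le_max_left 0 _) hs.1.le,
      le_trans hs.2.le (min_le_left _ _)⟩
    have hsball : s ∈ Metric.ball t δ := by
      rw [Metric.mem_ball, Real.dist_eq, abs_lt]
      constructor
      · have := lt_of_le_of_lt (le_max_right 0 (t - δ)) hs.1; linarith
      · have := lt_of_lt_of_le hs.2 (min_le_right T (t + δ)); linarith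
    have hfs : f s ≠ 0 := hUsub ⟨hball hsball, hs1⟩
    refine ⟨pow_ne_zero 2 hfs, ?_, hs1.2⟩
    exact lt_of_le_of_lt (le_max_left 0 (t - δ)) hs.1
  calc (0:ENNReal) < volume (Set.Ioo l u) := by
        rw [Real.volume_Ioo]; simp [hlu, ENNReal.ofReal_pos]
    _ ≤ _ := measure_mono hsub

/-- Lemma 4 (paper): with the index set `{1,…,p}` partitioned into blocks `B` assigned to the
`N` agents, if each per-agent block Gram matrix `M_i = ∫_0^T K_i^{(i)} (K_i^{(i)})ᵀ dt` is
positive definite, and the union of agent trajectories passes through points `c_1,…,c_p` at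
which the vectors `K(c_j)` are linearly independent, then
`∑_{i=1}^N ∫_0^T K_i(t) K_i(t)ᵀ dt` is positive definite. -/
theorem stmt10 {n p N : ℕ} (T : ℝ) (hT : 0 < T)
    (K : (Fin n → ℝ) → Fin p → ℝ) (hK : Continuous K)
    (x : Fin N → ℝ → (Fin n → ℝ)) (hx : ∀ i, ContinuousOn (x i) (Set.Icc 0 T))
    -- block assignment: coordinate `j` of the parameter vector belongs to agent `B j`
    (B : Fin p → Fin N)
    (M : (i : Fin N) → Matrix {j : Fin p // B j = i} {j : Fin p // B j = i} ℝ)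
    (hM : ∀ i a b, M i a b = ∫ t in (0 : ℝ)..T, K (x i t) a.val * K (x i t) b.val)
    (hMpd : ∀ i, ∀ v : {j : Fin p // B j = i} → ℝ, v ≠ 0 → 0 < v ⬝ᵥ (M i *ᵥ v))
    (c : Fin p → (Fin n → ℝ))
    (hvisit : ∀ j, ∃ i, ∃ t ∈ Set.Icc (0 : ℝ) T, x i t = c j)
    (hli : LinearIndependent ℝ fun j => K (c j))
    (S : Matrix (Fin p) (Fin p) ℝ)
    (hS : ∀ a b, S a b = ∑ i : Fin N, ∫ t in (0 : ℝ)..T, K (x i t) a * K (x i t) b) :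
    ∀ v : Fin p → ℝ, v ≠ 0 → 0 < v ⬝ᵥ (S *ᵥ v) := by
  intro v hv
  -- per-agent scalar function g i t = K(x i t) ⬝ v
  set g : Fin N → ℝ → ℝ := fun i t => ∑ a, K (x i t) a * v a with hg
  have hgc : ∀ i, ContinuousOn (g i) (Set.Icc 0 T) := by
    intro i
    apply continuousOn_finset_sum
    intro a _
    exact ((continuous_apply a).comp_continuousOn (hK.comp_continuousOn (hx i))).mul
      continuousOn_const
  have hKc : ∀ i (a : Fin p), ContinuousOn (fun t => K (x i t) a) (Set.Icc 0 T) :=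
    fun i a => (continuous_apply a).comp_continuousOn (hK.comp_continuousOn (hx i))
  have hint : ∀ i (a b : Fin p),
      IntervalIntegrable (fun t => K (x i t) a * K (x i t) b) volume 0 T := by
    intro i a b
    apply ContinuousOn.intervalIntegrable
    rw [Set.uIcc_of_le hT.le]
    exact (hKc i a).mul (hKc i b)
  -- key identity
  have key : v ⬝ᵥ (S *ᵥ v) = ∑ i, ∫ t in (0:ℝ)..T, (g i t) ^ 2 := by
    have hsq : ∀ i, ∀ t, (g i t) ^ 2
        = ∑ a, ∑ b, v a * v b * (K (x i t) a * K (x i t) b) := by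
      intro i t
      rw [sq, hg]
      simp only []
      rw [Finset.sum_mul_sum]
      refine Finset.sum_congr rfl fun a _ => Finset.sum_congr rfl fun b _ => by ring
    have hint1 : ∀ i (a b : Fin p), IntervalIntegrable
        (fun t => v a * v b * (K (x i t) a * K (x i t) b)) volume 0 T := by
      intro i a b
      apply ContinuousOn.intervalIntegrable
      rw [Set.uIcc_of_le hT.le]
      exact continuousOn_const.mul ((hKc i a).mul (hKc i b))
    have hint2 : ∀ i (a : Fin p), IntervalIntegrable
        (fun t => ∑ b, v a * v b * (K (x i t) a * K (x i t) b)) volume 0 T := by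
      intro i a
      apply ContinuousOn.intervalIntegrable
      rw [Set.uIcc_of_le hT.le]
      apply continuousOn_finset_sum
      intro b _
      exact continuousOn_const.mul ((hKc i a).mul (hKc i b))
    have step : ∀ i, (∫ t in (0:ℝ)..T, (g i t) ^ 2)
        = ∑ a, ∑ b, v a * v b * ∫ t in (0:ℝ)..T, K (x i t) a * K (x i t) b := by
      intro i
      simp_rw [hsq i]
      calc (∫ t in (0:ℝ)..T, ∑ a, ∑ b, v a * v b * (K (x i t) a * K (x i t) b))
          = ∑ a, ∫ t in (0:ℝ)..T, ∑ b, v a * v b * (K (x i t) a * K (x i t) b) :=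
            intervalIntegral.integral_finset_sum (fun a _ => hint2 i a)
        _ = ∑ a, ∑ b, ∫ t in (0:ℝ)..T, v a * v b * (K (x i t) a * K (x i t) b) :=
            Finset.sum_congr rfl fun a _ =>
              intervalIntegral.integral_finset_sum (fun b _ => hint1 i a b)
        _ = ∑ a, ∑ b, v a * v b * ∫ t in (0:ℝ)..T, K (x i t) a * K (x i t) b :=
            Finset.sum_congr rfl fun a _ => Finset.sum_congr rfl fun b _ =>
              intervalIntegral.integral_const_mul _ _
    have lhs : v ⬝ᵥ (S *ᵥ v) = ∑ a, ∑ b, ∑ i, v a * v b *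
        ∫ t in (0:ℝ)..T, K (x i t) a * K (x i t) b := by
      simp only [dotProduct, mulVec]
      refine Finset.sum_congr rfl fun a _ => ?_
      rw [Finset.mul_sum]
      refine Finset.sum_congr rfl fun b _ => ?_
      rw [hS a b, Finset.sum_mul, Finset.mul_sum]
      refine Finset.sum_congr rfl fun i _ => ?_
      ring
    rw [lhs, Finset.sum_congr rfl (fun i (_ : i ∈ Finset.univ) => step i)]
    calc (∑ a, ∑ b, ∑ i, v a * v b * ∫ t in (0:ℝ)..T, K (x i t) a * K (x i t) b)
        = ∑ a, ∑ i, ∑ b, v a * v b * ∫ t in (0:ℝ)..T, K (x i t) a * K (x i t) b :=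
          Finset.sum_congr rfl fun a _ => Finset.sum_comm
      _ = ∑ i, ∑ a, ∑ b, v a * v b * ∫ t in (0:ℝ)..T, K (x i t) a * K (x i t) b :=
          Finset.sum_comm
  rw [key]
  -- nonnegativity of each term
  have hnn : ∀ i, 0 ≤ ∫ t in (0:ℝ)..T, (g i t) ^ 2 := fun i =>
    intervalIntegral.integral_nonneg hT.le (fun t _ => sq_nonneg _)
  -- there is j with K (c j) ⬝ v ≠ 0
  have hexj : ∃ j, (∑ a, K (c j) a * v a) ≠ 0 := by
    by_contra h
    push_neg at h
    apply hv
    have hspan : Submodule.span ℝ (Set.range fun j => K (c j)) = ⊤ :=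
      hli.span_eq_top_of_card_eq_finrank' (by simp)
    let φ : (Fin p → ℝ) →ₗ[ℝ] ℝ :=
      { toFun := fun w => w ⬝ᵥ v
        map_add' := fun a b => add_dotProduct a b v
        map_smul' := fun r a => smul_dotProduct r a v }
    have hker : Submodule.span ℝ (Set.range fun j => K (c j)) ≤ LinearMap.ker φ :=
      Submodule.span_le.2 (by
        rintro _ ⟨j, rfl⟩
        simpa [φ, LinearMap.mem_ker, dotProduct] using h j)
    rw [hspan] at hker
    have h2 : v ⬝ᵥ v = 0 := hker Submodule.mem_top
    exact dotProduct_self_eq_zero.1 h2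
  obtain ⟨j, hj⟩ := hexj
  obtain ⟨i, t, ht, hxt⟩ := hvisit j
  have hgit : g i t ≠ 0 := by
    rw [hg]; simp only []; rw [hxt]; exact hj
  have hpos : 0 < ∫ s in (0:ℝ)..T, (g i s) ^ 2 :=
    sq_integral_pos hT (hgc i) ht hgit
  calc (0:ℝ) < ∫ s in (0:ℝ)..T, (g i s) ^ 2 := hpos
    _ ≤ ∑ i, ∫ t in (0:ℝ)..T, (g i t) ^ 2 :=
      Finset.single_le_sum (fun i _ => hnn i) (Finset.mem_univ i)
end

section
/- Consider the coupled error dynamics ȧ̃_i = -Γ(S_i(t) ã_i) - Γ ζ Σ_j l_{ij}(ã_i - ã_j + a - a) for i = 1,...,N, i.e., the adaptation law ȧ̂_i = -Γ(Λ_i â_i - λ_i) - Γζ Σ_j l_{ij}(â_i - â_j), with Γ positive definite, ζ > 0, (l_{ij}) weights of a connected graph with Laplacian L, Λ_i(t) = ∫_0^t K_i K_i^T dτ, λ_i(t) = ∫_0^t K_i φ_i dτ, φ_i = K_i^T a. Then V(t) = (1/2) Σ_i ã_i^T Γ^{-1} ã_i is nonincreasing, and V̇ = -Σ_i ã_i^T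 Λ_i(t) ã_i - ζ Σ_{α=1}^p (â^α)^T L â^α ≤ 0 where â^α ∈ R^N stacks the α-th parameter estimate of all agents. -/
/-!
Differentiating `V` along the flow, `Γ⁻¹` cancels the gain `Γ`, and since `λᵢ = Λᵢ a` the
estimation term of agent `i` contributes `-ãᵢᵀ Λᵢ ãᵢ ≤ 0`, as `Λᵢ(t)` is a Gram integral
`∫₀ᵗ KᵢKᵢᵀ`. Regrouped by parameter coordinate, the consensus terms contribute
`-ζ ∑_α (ã^α)ᵀ L â^α`, and `ã^α = â^α - a_α` may be replaced by `â^α` because the nonnegative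
quadratic form of `L` is blind to constant shifts.
-/

open Matrix MeasureTheory

section GramIntegral

variable {n : Type*} [Fintype n]

theorem intervalIntegral_dotProduct_const {g : ℝ → n → ℝ} (hg : Continuous g) (v : n → ℝ)
    (s t : ℝ) : ∫ τ in s..t, g τ ⬝ᵥ v = (fun b => ∫ τ in s..t, g τ b) ⬝ᵥ v := by
  simp only [dotProduct]
  rw [intervalIntegral.integral_finsetSum fun b _ =>
    (show Continuous fun τ => g τ b * v b by fun_prop).intervalIntegrable s t]
  simp only [intervalIntegral.integral_mul_const]

variable {K : ℝ → n → ℝ} {Λ : Matrix n n ℝ} {s t : ℝ}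

theorem mulVec_eq_intervalIntegral_of_gram (hK : Continuous K)
    (hΛ : ∀ b d, Λ b d = ∫ τ in s..t, K τ b * K τ d) (v : n → ℝ) :
    Λ *ᵥ v = fun b => ∫ τ in s..t, K τ b * (K τ ⬝ᵥ v) := by
  funext b
  calc (Λ *ᵥ v) b = (fun d => ∫ τ in s..t, (K τ b • K τ) d) ⬝ᵥ v := by
        simp only [mulVec, hΛ, Pi.smul_apply, smul_eq_mul]
    _ = ∫ τ in s..t, (K τ b • K τ) ⬝ᵥ v :=
        (intervalIntegral_dotProduct_const (by fun_prop) v s t).symm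
    _ = ∫ τ in s..t, K τ b * (K τ ⬝ᵥ v) := by simp only [smul_dotProduct, smul_eq_mul]

theorem dotProduct_mulVec_eq_intervalIntegral_sq_s12 (hK : Continuous K)
    (hΛ : ∀ b d, Λ b d = ∫ τ in s..t, K τ b * K τ d) (v : n → ℝ) :
    v ⬝ᵥ (Λ *ᵥ v) = ∫ τ in s..t, (K τ ⬝ᵥ v) ^ 2 := by
  rw [dotProduct_comm, mulVec_eq_intervalIntegral_of_gram hK hΛ]
  calc (fun b => ∫ τ in s..t, K τ b * (K τ ⬝ᵥ v)) ⬝ᵥ v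
      = (fun b => ∫ τ in s..t, ((K τ ⬝ᵥ v) • K τ) b) ⬝ᵥ v := by
        simp only [Pi.smul_apply, smul_eq_mul, mul_comm]
    _ = ∫ τ in s..t, ((K τ ⬝ᵥ v) • K τ) ⬝ᵥ v :=
        (intervalIntegral_dotProduct_const (by fun_prop) v s t).symm
    _ = ∫ τ in s..t, (K τ ⬝ᵥ v) ^ 2 := by simp only [smul_dotProduct, smul_eq_mul, sq]

theorem dotProduct_mulVec_nonneg_of_gram (hK : Continuous K)
    (hΛ : ∀ b d, Λ b d = ∫ τ in s..t, K τ b * K τ d) (hst : s ≤ t) (v : n → ℝ) :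
    0 ≤ v ⬝ᵥ (Λ *ᵥ v) := by
  rw [dotProduct_mulVec_eq_intervalIntegral_sq_s12 hK hΛ]
  exact intervalIntegral.integral_nonneg hst fun _ _ => sq_nonneg _

end GramIntegral

section Laplacian

variable {ι : Type*} [Fintype ι] {l : ι → ι → ℝ} {L : Matrix ι ι ℝ}

/-- The quadratic form of `L` at `w + s` is affine in `s` with this sum as slope; being bounded
below, it has slope zero. -/
theorem sum_sum_laplacian_eq_zero
    (hL : ∀ w : ι → ℝ, (∑ i, w i * ∑ j, l i j * (w i - w j)) = w ⬝ᵥ (L *ᵥ w))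
    (hLpsd : ∀ w : ι → ℝ, 0 ≤ w ⬝ᵥ (L *ᵥ w)) (w : ι → ℝ) :
    ∑ i, ∑ j, l i j * (w i - w j) = 0 := by
  set D := ∑ i, ∑ j, l i j * (w i - w j)
  have hshift : ∀ s : ℝ,
      (fun i => w i + s) ⬝ᵥ (L *ᵥ fun i => w i + s) = w ⬝ᵥ (L *ᵥ w) + s * D := by
    intro s
    rw [← hL w, ← hL (fun i => w i + s)]
    simp only [D, add_sub_add_right_eq_sub, add_mul, Finset.sum_add_distrib, Finset.mul_sum]
  by_contra hD
  have hq := hLpsd fun i => w i + -(w ⬝ᵥ (L *ᵥ w) + 1) / D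
  rw [hshift, div_mul_cancel₀ _ hD] at hq
  linarith

theorem sum_sub_const_mul_laplacian
    (hL : ∀ w : ι → ℝ, (∑ i, w i * ∑ j, l i j * (w i - w j)) = w ⬝ᵥ (L *ᵥ w))
    (hLpsd : ∀ w : ι → ℝ, 0 ≤ w ⬝ᵥ (L *ᵥ w)) (w : ι → ℝ) (c : ℝ) :
    ∑ i, (w i - c) * ∑ j, l i j * (w i - w j) = w ⬝ᵥ (L *ᵥ w) := by
  rw [← hL w]
  simp only [sub_mul, Finset.sum_sub_distrib, ← Finset.mul_sum,
    sum_sum_laplacian_eq_zero hL hLpsd w, mul_zero, sub_zero]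

theorem sum_dotProduct_consensus {n : Type*} [Fintype n]
    (hL : ∀ w : ι → ℝ, (∑ i, w i * ∑ j, l i j * (w i - w j)) = w ⬝ᵥ (L *ᵥ w))
    (hLpsd : ∀ w : ι → ℝ, 0 ≤ w ⬝ᵥ (L *ᵥ w)) (x : ι → n → ℝ) (a : n → ℝ) :
    ∑ i, (x i - a) ⬝ᵥ (fun γ => ∑ j, l i j * (x i γ - x j γ))
      = ∑ α, (fun j => x j α) ⬝ᵥ (L *ᵥ fun j => x j α) := by
  calc _ = ∑ α, ∑ i, (x i α - a α) * ∑ j, l i j * (x i α - x j α) := by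
        simp only [dotProduct, Pi.sub_apply]
        exact Finset.sum_comm
    _ = _ := Finset.sum_congr rfl fun α _ =>
        sum_sub_const_mul_laplacian hL hLpsd (fun j => x j α) (a α)

end Laplacian

theorem hasDerivAt_dotProduct_mulVec_self {n : Type*} [Fintype n] {M : Matrix n n ℝ}
    (hM : Mᵀ = M) {x : ℝ → n → ℝ} {x' : n → ℝ} {t : ℝ}
    (hx : ∀ β, HasDerivAt (fun s => x s β) (x' β) t) :
    HasDerivAt (fun s => x s ⬝ᵥ (M *ᵥ x s)) (2 * (x t ⬝ᵥ (M *ᵥ x'))) t := by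
  have h := HasDerivAt.fun_sum (u := Finset.univ) fun β _ =>
    (hx β).mul (HasDerivAt.fun_sum (u := Finset.univ) fun γ _ => (hx γ).const_mul (M β γ))
  refine h.congr_deriv ?_
  rw [Finset.sum_add_distrib]
  change x' ⬝ᵥ (M *ᵥ x t) + x t ⬝ᵥ (M *ᵥ x') = _
  rw [dotProduct_mulVec x', ← mulVec_transpose, hM, dotProduct_comm]
  ring

theorem hasDerivAt_consensus_lyapunov {ι n : Type*} [Fintype ι] [Fintype n] [DecidableEq n]
    {Γ : Matrix n n ℝ} (hΓ : Γ.PosDef) (ζ : ℝ) {l : ι → ι → ℝ} {L : Matrix ι ι ℝ}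
    (hL : ∀ w : ι → ℝ, (∑ i, w i * ∑ j, l i j * (w i - w j)) = w ⬝ᵥ (L *ᵥ w))
    (hLpsd : ∀ w : ι → ℝ, 0 ≤ w ⬝ᵥ (L *ᵥ w)) {Λ : ι → Matrix n n ℝ} {a : n → ℝ}
    {x : ι → ℝ → n → ℝ} {t : ℝ}
    (hdyn : ∀ i β, HasDerivAt (fun s => x i s β)
      ((-(Γ *ᵥ (Λ i *ᵥ (x i t - a))) - ζ • (Γ *ᵥ fun γ => ∑ j, l i j * (x i t γ - x j t γ))) β) t) :
    HasDerivAt (fun s => (1 / 2) * ∑ i, (x i s - a) ⬝ᵥ (Γ⁻¹ *ᵥ (x i s - a)))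
      (-(∑ i, (x i t - a) ⬝ᵥ (Λ i *ᵥ (x i t - a)))
        - ζ * ∑ α, (fun j => x j t α) ⬝ᵥ (L *ᵥ fun j => x j t α)) t := by
  have hΓinv : Γ⁻¹ᵀ = Γ⁻¹ := by
    simpa only [conjTranspose_eq_transpose_of_trivial] using hΓ.inv.isHermitian.eq
  have hcancel : Γ⁻¹ * Γ = 1 := nonsing_inv_mul Γ ((isUnit_iff_isUnit_det Γ).mp hΓ.isUnit)
  have hΓ_cancel : ∀ u c : n → ℝ, Γ⁻¹ *ᵥ (-(Γ *ᵥ u) - ζ • (Γ *ᵥ c)) = -u - ζ • c := by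
    intro u c
    rw [mulVec_sub, mulVec_neg, mulVec_smul, mulVec_mulVec, mulVec_mulVec, hcancel, one_mulVec,
      one_mulVec]
  set c : ι → n → ℝ := fun i γ => ∑ j, l i j * (x i t γ - x j t γ)
  have hq : ∀ i, HasDerivAt (fun s => (x i s - a) ⬝ᵥ (Γ⁻¹ *ᵥ (x i s - a)))
      (2 * ((x i t - a) ⬝ᵥ (-(Λ i *ᵥ (x i t - a)) - ζ • c i))) t := by
    intro i
    rw [← hΓ_cancel]
    exact hasDerivAt_dotProduct_mulVec_self hΓinv fun β => (hdyn i β).sub_const (a β)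
  refine ((HasDerivAt.fun_sum fun i _ => hq i).const_mul (1 / 2)).congr_deriv ?_
  rw [← sum_dotProduct_consensus hL hLpsd (fun i => x i t) a, Finset.mul_sum, Finset.mul_sum,
    ← Finset.sum_neg_distrib, ← Finset.sum_sub_distrib]
  refine Finset.sum_congr rfl fun i _ => ?_
  rw [dotProduct_sub, dotProduct_neg, dotProduct_smul, smul_eq_mul]
  ring

/-- Theorem 2's Lyapunov computation (paper): under the consensus adaptation law
`ȧ̂ᵢ = -Γ(Λᵢ âᵢ - λᵢ) - Γζ ∑ⱼ lᵢⱼ(âᵢ - âⱼ)`, the function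
`V = ½ ∑ᵢ ãᵢᵀ Γ⁻¹ ãᵢ` is nonincreasing and
`V̇ = -∑ᵢ ãᵢᵀ Λᵢ(t) ãᵢ - ζ ∑_α (â^α)ᵀ L â^α ≤ 0`. -/
theorem stmt12 {p N : ℕ}
    (Γ : Matrix (Fin p) (Fin p) ℝ) (hΓsymm : Γᵀ = Γ)
    (hΓpd : ∀ v : Fin p → ℝ, v ≠ 0 → 0 < v ⬝ᵥ (Γ *ᵥ v))
    (ζ : ℝ) (hζ : 0 < ζ)
    (l : Fin N → Fin N → ℝ)
    (L : Matrix (Fin N) (Fin N) ℝ)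
    -- `L` is the graph Laplacian of the (connected) weighted graph with weights `l i j`
    (hL : ∀ w : Fin N → ℝ, (∑ i, w i * ∑ j, l i j * (w i - w j)) = w ⬝ᵥ (L *ᵥ w))
    (hLpsd : ∀ w : Fin N → ℝ, 0 ≤ w ⬝ᵥ (L *ᵥ w))
    (K : Fin N → ℝ → Fin p → ℝ) (hK : ∀ i, Continuous (K i))
    (a : Fin p → ℝ)
    (Λ : Fin N → ℝ → Matrix (Fin p) (Fin p) ℝ)
    (hΛ : ∀ i t b d, Λ i t b d = ∫ τ in (0 : ℝ)..t, K i τ b * K i τ d)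
    (lam : Fin N → ℝ → Fin p → ℝ)
    (hlam : ∀ i t b, lam i t b = ∫ τ in (0 : ℝ)..t, K i τ b * (K i τ ⬝ᵥ a))
    (ahat : Fin N → ℝ → Fin p → ℝ)
    (hdyn : ∀ i t β, HasDerivAt (fun s => ahat i s β)
      ((-(Γ *ᵥ (Λ i t *ᵥ ahat i t - lam i t))
        - ζ • (Γ *ᵥ fun γ => ∑ j, l i j * (ahat i t γ - ahat j t γ))) β) t)
    (V : ℝ → ℝ)
    (hV : ∀ t, V t = (1 / 2) * ∑ i, (ahat i t - a) ⬝ᵥ (Γ⁻¹ *ᵥ (ahat i t - a))) :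
    AntitoneOn V (Set.Ici 0) ∧
      ∀ t ≥ (0 : ℝ),
        deriv V t = -(∑ i, (ahat i t - a) ⬝ᵥ (Λ i t *ᵥ (ahat i t - a)))
            - ζ * ∑ α : Fin p, (fun j => ahat j t α) ⬝ᵥ (L *ᵥ fun j => ahat j t α) ∧
          deriv V t ≤ 0 := by
  have hΓ : Γ.PosDef := .of_dotProduct_mulVec_pos
    (by rwa [IsHermitian, conjTranspose_eq_transpose_of_trivial]) (by simpa using hΓpd)
  have hV' : ∀ t, HasDerivAt V (-(∑ i, (ahat i t - a) ⬝ᵥ (Λ i t *ᵥ (ahat i t - a)))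
      - ζ * ∑ α : Fin p, (fun j => ahat j t α) ⬝ᵥ (L *ᵥ fun j => ahat j t α)) t := by
    intro t
    rw [funext hV]
    refine hasDerivAt_consensus_lyapunov hΓ ζ hL hLpsd fun i β => ?_
    have hlamΛ : lam i t = Λ i t *ᵥ a := by
      rw [mulVec_eq_intervalIntegral_of_gram (hK i) (hΛ i t)]
      exact funext (hlam i t)
    simpa only [hlamΛ, ← mulVec_sub] using hdyn i t β
  have hV'_nonpos : ∀ t ≥ (0 : ℝ), deriv V t ≤ 0 := by
    intro t ht
    have hΛ_nonneg := Finset.sum_nonneg fun i (_ : i ∈ Finset.univ) =>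
      dotProduct_mulVec_nonneg_of_gram (hK i) (hΛ i t) ht (ahat i t - a)
    have hL_nonneg := Finset.sum_nonneg fun α (_ : α ∈ Finset.univ) =>
      hLpsd fun j => ahat j t α
    rw [(hV' t).deriv]
    linarith [mul_nonneg hζ.le hL_nonneg]
  have hVdiff : Differentiable ℝ V := fun t => (hV' t).differentiableAt
  exact ⟨antitoneOn_of_deriv_nonpos (convex_Ici 0) hVdiff.continuous.continuousOn
      hVdiff.differentiableOn fun t ht => hV'_nonpos t (interior_subset ht),
    fun t ht => ⟨(hV' t).deriv, hV'_nonpos t ht⟩⟩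
end
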